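/- Let f be the Fibonacci word and g = 0f (the Fibonacci word prefixed with a 0). For every nonempty finite set A ⊆ ℕ, the sum Σ_{n ∈ A} F_{2n+2} is a position at which g has the letter 0, and the sum Σ_{n ∈ A} F_{2n+1} is a position at which g has the letter 1 (where F_0 = 1, F_1 = 2, F_{n+2} = F_{n+1} + F_n). Consequently both g|_0 and g|_1 are IP-sets, and so neither g|_0 nor g|_1 is an IP*-set. -/

import Mathlib

/-- The set of occurrences of the finite word `u` in the infinite word `x`. -/
def Occ {A : Type*} (x : ℕ → A) (u : List A) : Set ℕ :=
  {n | u = (List.range u.length).map fun i => x (n + i)}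

/-- `u` is a prefix of the infinite word `x`. -/
def IsPref {A : Type*} (u : List A) (x : ℕ → A) : Prop :=
  u = (List.range u.length).map x

/-- `S` is an IP-set: it contains all finite sums of distinct terms of some
strictly increasing sequence of natural numbers. -/
def IPSet (S : Set ℕ) : Prop :=
  ∃ x : ℕ → ℕ, StrictMono x ∧
    ∀ F : Finset ℕ, F.Nonempty → (∑ n ∈ F, x n) ∈ S

/-- `S` is an IP*-set: it meets every IP-set. -/
def IPStar (S : Set ℕ) : Prop :=
  ∀ B : Set ℕ, IPSet B → (S ∩ B).Nonempty

/-- The Fibonacci substitution 0 ↦ 01, 1 ↦ 0. -/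
def σfib : ℕ → List ℕ := fun a => if a = 0 then [0, 1] else [0]


/-!
The blocks `fibWord k = σᵏ(0)` satisfy `fibWord (k + 2) = fibWord (k + 1) ++ fibWord k` and
`|fibWord k| = F k`, and all of them are prefixes of `f`. Hence `g (F (k + 1) + q) = g q` for `0 < q ≤ F k`. Since
`∑_{n < M} F (2n + j + 1) < F (2M + j)`, this shift strips the largest term off
`∑_{n ∈ A} F (2n + j + 1)` without changing the letter of `g`, so that letter is
`g (F (j + 1))`: `0` for `j = 1` and `1` for `j = 0`. Both letter sets are therefore IP-sets, and
since they are disjoint, each misses an IP-set, namely the other one.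
-/

theorem not_ipStar_of_ipSet_of_disjoint {S B : Set ℕ} (hB : IPSet B) (hSB : Disjoint S B) :
    ¬ IPStar S := fun hS => Set.not_nonempty_iff_eq_empty.2 hSB.inter_eq (hS B hB)

theorem IsPref.apply_length_add {A : Type*} {u v : List A} {x : ℕ → A}
    (huv : IsPref (u ++ v) x) (hv : IsPref v x) {p : ℕ} (hp : p < v.length) :
    x (u.length + p) = x p := by
  have h₁ := congrArg (·[u.length + p]?) huv
  have h₂ := congrArg (·[p]?) hv
  simp only [List.getElem?_append_right (Nat.le_add_right _ _), Nat.add_sub_cancel_left,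
    List.getElem?_map, List.getElem?_range (Nat.add_lt_add_left hp _), List.getElem?_range hp,
    List.length_append, Option.map_some] at h₁ h₂
  rw [h₂] at h₁
  exact (Option.some_injective _ h₁).symm

section FibonacciLike

variable {F : ℕ → ℕ}

theorem fibLike_pos (h0 : 0 < F 0) (h1 : 0 < F 1) (hF : ∀ n, F (n + 2) = F (n + 1) + F n) :
    ∀ n, 0 < F n
  | 0 => h0
  | 1 => h1
  | n + 2 => by rw [hF]; exact Nat.add_pos_right _ (fibLike_pos h0 h1 hF n)

theorem strictMono_fibLike_two_mul_add (hpos : ∀ n, 0 < F n)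
    (hF : ∀ n, F (n + 2) = F (n + 1) + F n) (c : ℕ) : StrictMono fun n => F (2 * n + c) := by
  refine strictMono_nat_of_lt_succ fun n => ?_
  rw [show 2 * (n + 1) + c = 2 * n + c + 2 by ring, hF]
  exact Nat.lt_add_of_pos_left (hpos _)

theorem sum_range_fibLike_add (hF : ∀ n, F (n + 2) = F (n + 1) + F n) (j M : ℕ) :
    ∑ n ∈ Finset.range M, F (2 * n + j + 1) + F j = F (2 * M + j) := by
  induction M with
  | zero => simp
  | succ M ih =>
    rw [Finset.sum_range_succ, add_right_comm, ih, show 2 * (M + 1) + j = 2 * M + j + 2 by ring,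
      hF, add_comm]

variable {g : ℕ → ℕ} (hpos : ∀ n, 0 < F n) (hF : ∀ n, F (n + 2) = F (n + 1) + F n)
  (hshift : ∀ k q, 0 < q → q ≤ F k → g (F (k + 1) + q) = g q)
include hpos hF hshift

theorem apply_fibLike_two_mul_add (i m : ℕ) : g (F (2 * m + i)) = g (F i) := by
  induction m with
  | zero => simp
  | succ m ih =>
    rw [show 2 * (m + 1) + i = 2 * m + i + 2 by ring, hF,
      hshift _ _ (hpos _) le_rfl, ih]

theorem apply_sum_fibLike (j : ℕ) {A : Finset ℕ} (hA : A.Nonempty) :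
    g (∑ n ∈ A, F (2 * n + j + 1)) = g (F (j + 1)) := by
  classical
  induction A using Finset.induction_on_max with
  | empty => exact absurd hA Finset.not_nonempty_empty
  | insert a s hlt ih =>
    have ha : a ∉ s := fun h => lt_irrefl a (hlt a h)
    rw [Finset.sum_insert ha]
    rcases s.eq_empty_or_nonempty with rfl | hs
    · rw [Finset.sum_empty, add_zero, add_assoc, apply_fibLike_two_mul_add hpos hF hshift]
    have hsum_pos : 0 < ∑ n ∈ s, F (2 * n + j + 1) := Finset.sum_pos (fun _ _ => hpos _) hs
    have hsum_le : ∑ n ∈ s, F (2 * n + j + 1) ≤ F (2 * a + j) := by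
      rw [← sum_range_fibLike_add hF]
      exact le_add_right (Finset.sum_le_sum_of_subset
        fun x hx => Finset.mem_range.2 (hlt x hx))
    rw [hshift _ _ hsum_pos hsum_le, ih hs]

end FibonacciLike

def fibWord : ℕ → List ℕ
  | 0 => [0]
  | k + 1 => (fibWord k).flatMap σfib

theorem fibWord_add_two (k : ℕ) : fibWord (k + 2) = fibWord (k + 1) ++ fibWord k := by
  induction k with
  | zero => rfl
  | succ k ih =>
    change (fibWord (k + 2)).flatMap σfib = _
    conv_lhs => rw [ih, List.flatMap_append]
    rfl

theorem length_fibWord {F : ℕ → ℕ} (hF0 : F 0 = 1) (hF1 : F 1 = 2)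
    (hF : ∀ n, F (n + 2) = F (n + 1) + F n) : ∀ k, (fibWord k).length = F k
  | 0 => hF0.symm
  | 1 => hF1.symm
  | k + 2 => by
    rw [fibWord_add_two, List.length_append, length_fibWord hF0 hF1 hF (k + 1),
      length_fibWord hF0 hF1 hF k, hF]

theorem isPref_fibWord {f : ℕ → ℕ} (hf0 : f 0 = 0)
    (hfix : ∀ n : ℕ, IsPref (((List.range n).map f).flatMap σfib) f) :
    ∀ k, IsPref (fibWord k) f
  | 0 => by simp [IsPref, fibWord, hf0]
  | k + 1 => by
    have h := hfix (fibWord k).length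
    rwa [← isPref_fibWord hf0 hfix k] at h

theorem apply_fibLike_succ_add_of_isPref {f F : ℕ → ℕ} (hf0 : f 0 = 0)
    (hfix : ∀ n : ℕ, IsPref (((List.range n).map f).flatMap σfib) f)
    (hF0 : F 0 = 1) (hF1 : F 1 = 2) (hF : ∀ n, F (n + 2) = F (n + 1) + F n)
    {k p : ℕ} (hp : p < F k) : f (F (k + 1) + p) = f p := by
  have hlen := length_fibWord hF0 hF1 hF
  have hpref := isPref_fibWord hf0 hfix
  have hblock : IsPref (fibWord (k + 1) ++ fibWord k) f := fibWord_add_two k ▸ hpref (k + 2)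
  rw [← hlen, hblock.apply_length_add (hpref k) (by rwa [hlen])]

theorem stmt_13_general (f : ℕ → ℕ) (hf0 : f 0 = 0)
    (hfix : ∀ n : ℕ, IsPref (((List.range n).map f).flatMap σfib) f)
    (F : ℕ → ℕ) (hF0 : F 0 = 1) (hF1 : F 1 = 2)
    (hF : ∀ n, F (n + 2) = F (n + 1) + F n)
    (g : ℕ → ℕ) (hg : ∀ n, g (n + 1) = f n) :
    (∀ A : Finset ℕ, A.Nonempty →
        g (∑ n ∈ A, F (2 * n + 2)) = 0 ∧ g (∑ n ∈ A, F (2 * n + 1)) = 1) ∧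
      IPSet {n | g n = 0} ∧ IPSet {n | g n = 1} ∧
      ¬ IPStar {n | g n = 0} ∧ ¬ IPStar {n | g n = 1} := by
  have hpos := fibLike_pos (by omega) (by omega) hF
  have hshift : ∀ k q, 0 < q → q ≤ F k → g (F (k + 1) + q) = g q := by
    intro k q hq hqk
    obtain ⟨p, rfl⟩ := Nat.exists_eq_add_one_of_ne_zero hq.ne'
    rw [← add_assoc, hg, hg, apply_fibLike_succ_add_of_isPref hf0 hfix hF0 hF1 hF hqk]
  have hf1 : f 1 = 1 := by
    have h : [0, 1] = [f 0, f 1] := isPref_fibWord hf0 hfix 1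
    simp only [List.cons.injEq, and_true] at h
    exact h.2.symm
  have hg_fib_two : g (F 2) = 0 := by rw [hF, hshift 0 _ (hpos 0) le_rfl, hF0, hg, hf0]
  have hg_fib_one : g (F 1) = 1 := by rw [hF1, hg, hf1]
  have key : ∀ A : Finset ℕ, A.Nonempty →
      g (∑ n ∈ A, F (2 * n + 2)) = 0 ∧ g (∑ n ∈ A, F (2 * n + 1)) = 1 := fun A hA =>
    ⟨by simpa [hg_fib_two] using apply_sum_fibLike hpos hF hshift 1 hA,
      by simpa [hg_fib_one] using apply_sum_fibLike hpos hF hshift 0 hA⟩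
  have hIP0 : IPSet {n | g n = 0} :=
    ⟨_, strictMono_fibLike_two_mul_add hpos hF 2, fun A hA => (key A hA).1⟩
  have hIP1 : IPSet {n | g n = 1} :=
    ⟨_, strictMono_fibLike_two_mul_add hpos hF 1, fun A hA => (key A hA).2⟩
  have hdisj : Disjoint {n | g n = 0} {n | g n = 1} :=
    Set.disjoint_left.2 fun n h0 h1 => by simp_all
  exact ⟨key, hIP0, hIP1, not_ipStar_of_ipSet_of_disjoint hIP1 hdisj,
    not_ipStar_of_ipSet_of_disjoint hIP0 hdisj.symm⟩

theorem stmt_13 (f : ℕ → ℕ) (hf0 : f 0 = 0)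
    (hfix : ∀ n : ℕ, IsPref (((List.range n).map f).flatMap σfib) f)
    (F : ℕ → ℕ) (hF0 : F 0 = 1) (hF1 : F 1 = 2)
    (hF : ∀ n, F (n + 2) = F (n + 1) + F n)
    (g : ℕ → ℕ) (hg0 : g 0 = 0) (hg : ∀ n, g (n + 1) = f n) :
    (∀ A : Finset ℕ, A.Nonempty →
        g (∑ n ∈ A, F (2 * n + 2)) = 0 ∧ g (∑ n ∈ A, F (2 * n + 1)) = 1) ∧
      IPSet {n | g n = 0} ∧ IPSet {n | g n = 1} ∧
      ¬ IPStar {n | g n = 0} ∧ ¬ IPStar {n | g n = 1} :=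
  stmt_13_general f hf0 hfix F hF0 hF1 hF g hg
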